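/- arXiv:2011.09462 — 6 statements merged into one kernel-verified Lean document; each statement's English description precedes it below -/
import Mathlib

section
/- The ratio of the density of a Laplace distribution with scale b centered at 0 to the density of a Laplace distribution with scale b centered at μ is bounded above by e^{|μ|/b} at every point. Consequently, for any measurable set O, P(Lap(b) ∈ O) ≤ e^{|μ|/b}·P(μ + Lap(b) ∈ O). -/
open MeasureTheory

/-- Density of the Laplace distribution with scale `b` centered at `0`. -/
noncomputable def lapD (b x : ℝ) : ℝ := (1 / (2 * b)) * Real.exp (-|x| / b)

/-- The Laplace distribution with scale `b` centered at `0`. -/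
noncomputable def lapM (b : ℝ) : Measure ℝ :=
  volume.withDensity fun x => ENNReal.ofReal (lapD b x)

/-! The pointwise bound is the triangle inequality `|x - μ| ≤ |x| + |μ|` in the exponent; the
bound on measures follows by integrating it against Lebesgue measure. -/

theorem lapD_le_exp_mul_lapD_sub {b : ℝ} (hb : 0 < b) (μ x : ℝ) :
    lapD b x ≤ Real.exp (|μ| / b) * lapD b (x - μ) := by
  have hexp : -|x| / b ≤ |μ| / b + -|x - μ| / b := by
    rw [← add_div, div_le_div_iff_of_pos_right hb]
    linarith [abs_sub x μ]
  calc lapD b x ≤ 1 / (2 * b) * Real.exp (|μ| / b + -|x - μ| / b) := by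
        unfold lapD; gcongr
    _ = Real.exp (|μ| / b) * lapD b (x - μ) := by
        rw [lapD, Real.exp_add]; ring

theorem MeasureTheory.Measure.withDensity_ofReal_le_smul {α : Type*} [MeasurableSpace α]
    (ν : Measure α) {f g : α → ℝ} {c : ℝ} (hc : 0 ≤ c) (hfg : ∀ x, f x ≤ c * g x) :
    ν.withDensity (fun x => ENNReal.ofReal (f x)) ≤
      ENNReal.ofReal c • ν.withDensity (fun x => ENNReal.ofReal (g x)) := by
  rw [← withDensity_smul' _ _ ENNReal.ofReal_ne_top]
  refine withDensity_mono (ae_of_all _ fun x => ?_)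
  simpa only [Pi.smul_apply, smul_eq_mul, ← ENNReal.ofReal_mul hc]
    using ENNReal.ofReal_le_ofReal (hfg x)

/-- The density ratio of a centered Laplace to a `μ`-shifted Laplace is at most
`exp (|μ|/b)` pointwise, and consequently the same bound holds for probabilities
of all measurable sets. -/
theorem laplace_density_ratio (b μ : ℝ) (hb : 0 < b) :
    (∀ x : ℝ, lapD b x ≤ Real.exp (|μ| / b) * lapD b (x - μ)) ∧
    (∀ O : Set ℝ, MeasurableSet O →
      lapM b O ≤ ENNReal.ofReal (Real.exp (|μ| / b)) *
        (volume.withDensity fun x => ENNReal.ofReal (lapD b (x - μ))) O) := by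
  have hpointwise := lapD_le_exp_mul_lapD_sub hb μ
  exact ⟨hpointwise, fun O _ =>
    volume.withDensity_ofReal_le_smul (Real.exp_nonneg _) hpointwise O⟩
end

section
/- The mechanism A(y) = wᵀy + Lap(Φ⁻¹(1 − ν/2)·√2·σ·‖w‖₂ / η), applied to y ~ N(μ, σ²I), is (η, 0, ν)-stable: with probability at least 1 − ν over independent draws (y, y') from N(μ, σ²I)⊗², the distributions A(y) and A(y') (over the Laplace noise only) are (η,0)-indistinguishable. -/
open MeasureTheory ProbabilityTheory
open Real

/-- Two distributions are `(η,τ)`-indistinguishable. -/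
def Indist {α : Type*} [MeasurableSpace α] (η τ : ℝ) (μ ν : Measure α) : Prop :=
  ∀ O : Set α, MeasurableSet O →
    μ O ≤ ENNReal.ofReal (Real.exp η) * ν O + ENNReal.ofReal τ ∧
    ν O ≤ ENNReal.ofReal (Real.exp η) * μ O + ENNReal.ofReal τ

lemma pdf_conv_pointwise (a c : ℝ) (u v : NNReal) (hu : u ≠ 0) (hv : v ≠ 0) (x t : ℝ) :
    gaussianPDFReal a u t * gaussianPDFReal c v (x - t) =
      gaussianPDFReal (a + c) (u + v) x *
        gaussianPDFReal (a + u * (x - a - c) / (u + v)) (u * v / (u + v)) t := by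
  have hu' : (0:ℝ) < u := lt_of_le_of_ne u.coe_nonneg (by exact_mod_cast (Ne.symm hu))
  have hv' : (0:ℝ) < v := lt_of_le_of_ne v.coe_nonneg (by exact_mod_cast (Ne.symm hv))
  have huv : (0:ℝ) < (u:ℝ) + v := by positivity
  simp only [gaussianPDFReal, NNReal.coe_add, NNReal.coe_div, NNReal.coe_mul]
  rw [mul_mul_mul_comm, mul_mul_mul_comm _ (rexp _), ← Real.exp_add, ← Real.exp_add]
  congr 1
  · rw [← mul_inv, ← mul_inv, ← Real.sqrt_mul (by positivity), ← Real.sqrt_mul (by positivity)]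
    congr 1
    field_simp
  · congr 1
    field_simp
    ring

lemma gaussian_conv (a c : ℝ) (u v : NNReal) :
    ((gaussianReal a u).prod (gaussianReal c v)).map (fun p : ℝ × ℝ => p.1 + p.2) =
      gaussianReal (a + c) (u + v) := by
  by_cases hu : u = 0
  · subst hu
    rw [gaussianReal_zero_var, Measure.dirac_prod, Measure.map_map (by fun_prop) (by fun_prop)]
    have : ((fun p : ℝ × ℝ => p.1 + p.2) ∘ Prod.mk a) = (a + ·) := rfl
    rw [this, gaussianReal_map_const_add]
    rw [add_comm c a, zero_add]
  by_cases hv : v = 0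
  · subst hv
    rw [gaussianReal_zero_var, Measure.prod_dirac, Measure.map_map (by fun_prop) (by fun_prop)]
    have : ((fun p : ℝ × ℝ => p.1 + p.2) ∘ (fun x => (x, c))) = (· + c) := rfl
    rw [this, gaussianReal_map_add_const, add_zero]
  have huv : u + v ≠ 0 := by simp [hu]
  have hw : u * v / (u + v) ≠ 0 := by
    rw [div_ne_zero_iff]
    exact ⟨mul_ne_zero hu hv, huv⟩
  ext s hs
  rw [Measure.map_apply (by fun_prop) hs, Measure.prod_apply (measurable_add hs)]
  have slice : ∀ x : ℝ, (gaussianReal c v) (Prod.mk x ⁻¹' ((fun p : ℝ × ℝ => p.1 + p.2) ⁻¹' s))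
      = ∫⁻ y in s, ENNReal.ofReal (gaussianPDFReal c v (y - x)) := by
    intro x
    have : Prod.mk x ⁻¹' ((fun p : ℝ × ℝ => p.1 + p.2) ⁻¹' s) = (x + ·) ⁻¹' s := rfl
    rw [this, ← Measure.map_apply (by fun_prop) hs, gaussianReal_map_const_add,
      gaussianReal_apply _ hv]
    refine setLIntegral_congr_fun hs (fun y _ => ?_)
    rw [gaussianPDF_def, gaussianPDFReal_sub]
  simp_rw [slice]
  have mpdf : Measurable fun p : ℝ × ℝ => ENNReal.ofReal (gaussianPDFReal c v (p.2 - p.1)) :=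
    ((measurable_gaussianPDFReal c v).comp (measurable_snd.sub measurable_fst)).ennreal_ofReal
  have hmeas : Measurable fun x => ∫⁻ y in s, ENNReal.ofReal (gaussianPDFReal c v (y - x)) := by
    refine Measurable.lintegral_prod_right' (f := fun p : ℝ × ℝ => ENNReal.ofReal (gaussianPDFReal c v (p.2 - p.1))) mpdf
  rw [gaussianReal_of_var_ne_zero _ hu,
    lintegral_withDensity_eq_lintegral_mul _ (measurable_gaussianPDF a u)
      hmeas]
  have key : ∀ y x : ℝ, gaussianPDF a u x * ENNReal.ofReal (gaussianPDFReal c v (y - x)) =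
      gaussianPDF (a + c) (u + v) y *
        gaussianPDF (a + u * (y - a - c) / (u + v)) (u * v / (u + v)) x := by
    intro y x
    simp only [gaussianPDF_def, ← ENNReal.ofReal_mul (gaussianPDFReal_nonneg _ _ _)]
    rw [pdf_conv_pointwise a c u v hu hv y x]
  calc ∫⁻ x, gaussianPDF a u x * ∫⁻ y in s, ENNReal.ofReal (gaussianPDFReal c v (y - x))
      = ∫⁻ x, ∫⁻ y in s, gaussianPDF a u x * ENNReal.ofReal (gaussianPDFReal c v (y - x)) := by
        refine lintegral_congr fun x => (lintegral_const_mul _ ((measurable_gaussianPDFReal c v).comp (measurable_id.sub_const x)).ennreal_ofReal).symm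
    _ = ∫⁻ y in s, ∫⁻ x, gaussianPDF a u x * ENNReal.ofReal (gaussianPDFReal c v (y - x)) := by
        exact lintegral_lintegral_swap
          (((measurable_gaussianPDF a u).comp measurable_fst).mul mpdf).aemeasurable
    _ = ∫⁻ y in s, gaussianPDF (a + c) (u + v) y := by
        refine lintegral_congr fun y => ?_
        simp_rw [key y]
        rw [lintegral_const_mul _ (measurable_gaussianPDF _ _), lintegral_gaussianPDF_eq_one _ hw,
          mul_one]
    _ = gaussianReal (a + c) (u + v) s := (gaussianReal_apply _ huv s).symm

lemma pi_gauss_map (v : NNReal) : ∀ (n : ℕ) (μ w : Fin n → ℝ),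
    (Measure.pi fun i => gaussianReal (μ i) v).map (fun y => ∑ i, w i * y i)
      = gaussianReal (∑ i, w i * μ i) (⟨∑ i, (w i)^2, by positivity⟩ * v) := by
  intro n
  induction n with
  | zero =>
    intro μ w
    simp only [Finset.univ_eq_empty, Finset.sum_empty]
    rw [Measure.map_const]
    simp only [measure_univ, one_smul]
    have : (⟨(0:ℝ), le_refl 0⟩ : NNReal) = 0 := rfl
    show Measure.dirac 0 = gaussianReal 0 ((0:NNReal) * v)
    rw [zero_mul, gaussianReal_zero_var]
  | succ n ih =>
    intro μ w
    have hmp := measurePreserving_piFinSuccAbove (fun i : Fin (n+1) => gaussianReal (μ i) v) 0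
    have hsum : (fun y : Fin (n+1) → ℝ => ∑ i, w i * y i) =
        (fun p : ℝ × (Fin n → ℝ) => w 0 * p.1 + ∑ j, w (Fin.succAbove 0 j) * p.2 j) ∘
          (MeasurableEquiv.piFinSuccAbove (fun _ => ℝ) 0) := by
      funext y
      simp [MeasurableEquiv.piFinSuccAbove, Fin.sum_univ_succAbove _ 0, Fin.tail]
    rw [hsum, ← Measure.map_map (by fun_prop) (MeasurableEquiv.measurable _), hmp.map_eq]
    have hcomp : (fun p : ℝ × (Fin n → ℝ) => w 0 * p.1 + ∑ j, w (Fin.succAbove 0 j) * p.2 j) =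
        (fun p : ℝ × ℝ => p.1 + p.2) ∘
          (Prod.map (fun x => w 0 * x) (fun z : Fin n → ℝ => ∑ j, w (Fin.succAbove 0 j) * z j)) := rfl
    rw [hcomp, ← Measure.map_map (by fun_prop) (by fun_prop), ← Measure.map_prod_map _ _ (by fun_prop) (by fun_prop),
      gaussianReal_map_const_mul, ih, gaussian_conv]
    congr 1
    · rw [Fin.sum_univ_succAbove (fun i => w i * μ i) 0]
    · ext
      push_cast
      show w 0 ^ 2 * (v:ℝ) + (∑ i : Fin n, w (Fin.succAbove 0 i) ^ 2) * v = (∑ i, w i ^ 2) * v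
      rw [Fin.sum_univ_succAbove (fun i => (w i)^2) 0]
      ring

lemma lapM_shift_apply (b s : ℝ) {O : Set ℝ} (hO : MeasurableSet O) :
    ((lapM b).map (fun z => s + z)) O = ∫⁻ x in O, ENNReal.ofReal (lapD b (x - s)) := by
  have hm : Measurable fun x => ENNReal.ofReal (lapD b x) := by
    unfold lapD; fun_prop
  rw [Measure.map_apply (by fun_prop) hO, lapM, withDensity_apply _ (hO.preimage (by fun_prop)),
    ← lintegral_indicator (hO.preimage (by fun_prop)), ← lintegral_indicator hO,
    ← lintegral_add_right_eq_self (fun x => O.indicator (fun x => ENNReal.ofReal (lapD b (x - s))) x) s]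
  congr 1
  funext x
  by_cases hx : x + s ∈ O
  · have hx' : s + x ∈ O := by rwa [add_comm]
    simp [Set.indicator_apply, Set.mem_preimage, hx, hx', add_sub_cancel_right]
  · have hx' : s + x ∉ O := by rwa [add_comm]
    simp [Set.indicator_apply, Set.mem_preimage, hx, hx']

lemma lap_le (b η : ℝ) (hb : 0 < b) (s₁ s₂ : ℝ) (h : |s₁ - s₂| ≤ η * b) (O : Set ℝ)
    (hO : MeasurableSet O) :
    ((lapM b).map (fun z => s₁ + z)) O ≤
      ENNReal.ofReal (Real.exp η) * ((lapM b).map (fun z => s₂ + z)) O := by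
  rw [lapM_shift_apply _ _ hO, lapM_shift_apply _ _ hO, ← lintegral_const_mul _ (by unfold lapD; fun_prop)]
  refine lintegral_mono fun x => ?_
  rw [← ENNReal.ofReal_mul (Real.exp_nonneg _)]
  refine ENNReal.ofReal_le_ofReal ?_
  unfold lapD
  rw [mul_left_comm, ← Real.exp_add]
  have hb' : (0:ℝ) < 1 / (2 * b) := by positivity
  refine mul_le_mul_of_nonneg_left (Real.exp_le_exp.2 ?_) hb'.le
  have habs : |x - s₂| - |x - s₁| ≤ |s₁ - s₂| := by
    have := abs_sub_abs_le_abs_sub (x - s₂) (x - s₁)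
    have h2 : (x - s₂) - (x - s₁) = s₁ - s₂ := by ring
    rw [h2] at this
    linarith [this]
  have key : (|x - s₂| - |x - s₁|) / b ≤ η := by
    rw [div_le_iff₀ hb]
    nlinarith
  rw [sub_div] at key
  rw [neg_div, neg_div]
  linarith

lemma lap_indist (b η : ℝ) (hb : 0 < b) (s₁ s₂ : ℝ) (h : |s₁ - s₂| ≤ η * b) :
    Indist η 0 ((lapM b).map (fun z => s₁ + z)) ((lapM b).map (fun z => s₂ + z)) := by
  intro O hO
  rw [abs_sub_comm] at h
  constructor
  · simpa using lap_le b η hb s₁ s₂ (by rwa [abs_sub_comm]) O hO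
  · simpa using lap_le b η hb s₂ s₁ h O hO

lemma gauss_std_symm : (gaussianReal 0 1).map (fun x : ℝ => -1 * x) = gaussianReal 0 1 := by
  rw [gaussianReal_map_const_mul]
  have h1 : (NNReal.mk ((-1:ℝ)^2) (sq_nonneg _)) = 1 := by ext; norm_num
  rw [h1, one_mul, mul_zero]

lemma gauss_Iic_zero : gaussianReal 0 1 (Set.Iic (0:ℝ)) = 1/2 := by
  have hIci : gaussianReal 0 1 (Set.Ici (0:ℝ)) = gaussianReal 0 1 (Set.Iic (0:ℝ)) := by
    conv_rhs => rw [← gauss_std_symm]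
    rw [Measure.map_apply (by fun_prop) measurableSet_Iic]
    congr 1
    ext x
    simp
  have hzero : gaussianReal 0 1 ({0} : Set ℝ) = 0 :=
    (gaussianReal_absolutelyContinuous 0 one_ne_zero) (volume_singleton)
  have hunion := measure_union_add_inter (μ := gaussianReal 0 1) (t := Set.Ici (0:ℝ))
    (Set.Iic (0:ℝ)) measurableSet_Ici
  rw [Set.Iic_union_Ici, Set.Iic_inter_Ici, Set.Icc_self, measure_univ, hzero, add_zero, hIci,
    ← two_mul] at hunion
  rw [ENNReal.eq_div_iff two_ne_zero ENNReal.ofNat_ne_top, hunion]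

lemma gauss_Ioi (q : ℝ) (ν : ℝ) (hq : gaussianReal 0 1 (Set.Iic q) = ENNReal.ofReal (1 - ν / 2))
    (hν : ν ∈ Set.Ioo (0:ℝ) 1) :
    gaussianReal 0 1 (Set.Iio (-q)) = ENNReal.ofReal (ν / 2) := by
  have h1 : gaussianReal 0 1 (Set.Iio (-q)) = gaussianReal 0 1 (Set.Ioi q) := by
    conv_rhs => rw [← gauss_std_symm]
    rw [Measure.map_apply (by fun_prop) measurableSet_Ioi]
    congr 1
    ext x
    simp only [Set.mem_Iio, Set.mem_preimage, Set.mem_Ioi, neg_mul, one_mul]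
    constructor <;> intro h <;> linarith
  rw [h1, ← Set.compl_Iic, measure_compl measurableSet_Iic (measure_ne_top _ _), measure_univ, hq,
    ← ENNReal.ofReal_one, ← ENNReal.ofReal_sub _ (by linarith [hν.2])]
  norm_num

lemma gauss_q_pos (q : ℝ) (ν : ℝ) (hq : gaussianReal 0 1 (Set.Iic q) = ENNReal.ofReal (1 - ν / 2))
    (hν : ν ∈ Set.Ioo (0:ℝ) 1) : 0 < q := by
  by_contra hle
  push_neg at hle
  have hmono : gaussianReal 0 1 (Set.Iic q) ≤ gaussianReal 0 1 (Set.Iic (0:ℝ)) :=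
    measure_mono (Set.Iic_subset_Iic.2 hle)
  rw [hq, gauss_Iic_zero] at hmono
  have h12 : (1/2 : ENNReal) = ENNReal.ofReal (1/2) := by
    rw [ENNReal.ofReal_div_of_pos two_pos, ENNReal.ofReal_one, ENNReal.ofReal_ofNat]
  rw [h12, ENNReal.ofReal_le_ofReal_iff (by norm_num)] at hmono
  linarith [hν.2]


/-- The mechanism `A(y) = wᵀy + Lap(Φ⁻¹(1 - ν/2) √2 σ ‖w‖₂ / η)` applied to
`y ~ N(μ, σ²I)` is `(η, 0, ν)`-stable: with probability at least `1 - ν` over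
independent draws `(y, y')`, the output distributions are `(η,0)`-indistinguishable. -/
theorem laplace_mechanism_stable (n : ℕ) (μ : Fin n → ℝ) (σ : NNReal) (hσ : 0 < σ)
    (w : Fin n → ℝ) (hw : w ≠ 0) (η ν : ℝ) (hη : 0 < η) (hν : ν ∈ Set.Ioo (0 : ℝ) 1)
    (q : ℝ) (hq : gaussianReal 0 1 (Set.Iic q) = ENNReal.ofReal (1 - ν / 2)) :
    ENNReal.ofReal (1 - ν) ≤
      ((Measure.pi fun i => gaussianReal (μ i) (σ ^ 2)).prod
          (Measure.pi fun i => gaussianReal (μ i) (σ ^ 2)))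
        {p | Indist η 0
          ((lapM (q * Real.sqrt 2 * (σ : ℝ) * Real.sqrt (∑ i, (w i) ^ 2) / η)).map
            (fun z => (∑ i, w i * p.1 i) + z))
          ((lapM (q * Real.sqrt 2 * (σ : ℝ) * Real.sqrt (∑ i, (w i) ^ 2) / η)).map
            (fun z => (∑ i, w i * p.2 i) + z))} := by
  obtain ⟨hν0, hν1⟩ := hν
  have hsumpos : 0 < ∑ i, (w i)^2 := by
    obtain ⟨i, hi⟩ := Function.ne_iff.1 hw
    exact Finset.sum_pos' (fun j _ => sq_nonneg _) ⟨i, Finset.mem_univ i, pow_pos (abs_pos.2 hi) 2 |>.trans_le (by rw [← abs_pow, abs_of_nonneg (sq_nonneg _)])⟩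
  set W := Real.sqrt (∑ i, (w i)^2) with hWdef
  have hW : 0 < W := Real.sqrt_pos.2 hsumpos
  have hq0 : 0 < q := gauss_q_pos q ν hq ⟨hν0, hν1⟩
  have hσ' : (0:ℝ) < σ := hσ
  set T : ℝ := q * Real.sqrt 2 * (σ:ℝ) * W with hT
  have hT0 : 0 < T :=
    mul_pos (mul_pos (mul_pos hq0 (Real.sqrt_pos.2 two_pos)) hσ') hW
  set b : ℝ := T / η with hbdef
  have hb0 : 0 < b := div_pos hT0 hη
  have hηb : η * b = T := by
    rw [hbdef]; field_simp
  set P := Measure.pi fun i => gaussianReal (μ i) (σ^2) with hP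
  set f : (Fin n → ℝ) → ℝ := fun y => ∑ i, w i * y i with hf
  set g : (Fin n → ℝ) → ℝ := fun y => ∑ i, (-w i) * y i with hg
  set S : ((Fin n → ℝ) × (Fin n → ℝ)) → ℝ := fun p => f p.1 + g p.2 with hS
  have hgS : ∀ p : (Fin n → ℝ) × (Fin n → ℝ),
      S p = (∑ i, w i * p.1 i) - (∑ i, w i * p.2 i) := by
    intro p
    simp only [hS, hf, hg, neg_mul, Finset.sum_neg_distrib]
    ring
  have hfm : Measurable f := by fun_prop
  have hgm : Measurable g := by fun_prop
  have hSm : Measurable S := hfm.comp measurable_fst |>.add (hgm.comp measurable_snd)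
  refine le_trans ?_ (measure_mono (?_ : S ⁻¹' (Set.Icc (-T) T) ⊆ _))
  swap
  · intro p hp
    simp only [Set.mem_preimage, Set.mem_Icc] at hp
    simp only [Set.mem_setOf_eq]
    refine lap_indist b η hb0 _ _ ?_
    rw [hηb, abs_le, ← hgS p]
    exact hp
  -- now compute the measure of the preimage
  set A : NNReal := ⟨∑ i, (w i)^2, hsumpos.le⟩ with hA
  set V2 : NNReal := A * σ^2 + A * σ^2 with hV2
  have hmapS : (P.prod P).map S = gaussianReal 0 V2 := by
    have hcomp : S = (fun p : ℝ × ℝ => p.1 + p.2) ∘ Prod.map f g := rfl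
    rw [hcomp, ← Measure.map_map (by fun_prop) (hfm.prodMap hgm),
      ← Measure.map_prod_map _ _ hfm hgm, hP, pi_gauss_map, pi_gauss_map, gaussian_conv]
    congr 1
    · simp [neg_mul, Finset.sum_neg_distrib]
    · ext
      simp only [neg_sq, hA]
      rfl
  rw [← Measure.map_apply hSm measurableSet_Icc, hmapS]
  have hc : Real.sqrt (V2 : ℝ) = Real.sqrt 2 * (σ:ℝ) * W := by
    have h1 : (V2 : ℝ) = (Real.sqrt 2 * (σ:ℝ) * W)^2 := by
      rw [hV2, hWdef, hA]
      show (∑ i, (w i)^2) * (σ:ℝ)^2 + (∑ i, (w i)^2) * (σ:ℝ)^2 = (Real.sqrt 2 * (σ:ℝ) * Real.sqrt (∑ i, (w i)^2))^2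
      push_cast [NNReal.coe_mk]
      rw [mul_pow, mul_pow, Real.sq_sqrt (by norm_num : (0:ℝ) ≤ 2),
        Real.sq_sqrt hsumpos.le]
      ring
    rw [h1, Real.sqrt_sq (by positivity)]
  have hstd : gaussianReal 0 V2 = (gaussianReal 0 1).map (fun x => (Real.sqrt (V2:ℝ)) * x) := by
    rw [gaussianReal_map_const_mul, mul_zero]
    congr 1
    ext
    push_cast
    rw [mul_one, Real.sq_sqrt V2.coe_nonneg]
  rw [hstd, Measure.map_apply (by fun_prop) measurableSet_Icc]
  have hcpos : 0 < Real.sqrt (V2:ℝ) := by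
    rw [hc]
    exact mul_pos (mul_pos (Real.sqrt_pos.2 two_pos) hσ') hW
  rw [Set.preimage_const_mul_Icc₀ _ _ hcpos]
  have hTq : T / Real.sqrt (V2:ℝ) = q := by
    rw [hc, hT]
    field_simp
  rw [neg_div, hTq]
  have hfin : gaussianReal 0 1 (Set.Icc (-q) q) = ENNReal.ofReal (1 - ν) := by
    have hsub2 : Set.Iio (-q) ⊆ Set.Iic q := by
      intro x hx
      simp only [Set.mem_Iio] at hx
      simp only [Set.mem_Iic]
      linarith
    rw [show Set.Icc (-q) q = Set.Iic q \ Set.Iio (-q) from by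
        ext x; simp only [Set.mem_Icc, Set.mem_diff, Set.mem_Iic, Set.mem_Iio, not_lt]; tauto,
      measure_diff hsub2 measurableSet_Iio.nullMeasurableSet
      (measure_ne_top _ _), hq, gauss_Ioi q ν hq ⟨hν0, hν1⟩,
      ← ENNReal.ofReal_sub _ (by positivity)]
    congr 1
    ring
  rw [hfin]
end

section
/- (Near-independence from stability) Let y, y' be independent draws from a distribution P on ℝⁿ, and let M̂ : ℝⁿ → S be an (η,τ,ν)-stable randomized algorithm with respect to P (with randomness independent of y, y'). Then for any measurable set O ⊆ ℝⁿ × S, P((y, M̂(y)) ∈ O) ≤ (e^η/(1−ν))·P((y', M̂(y)) ∈ O) + τ + ν. -/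
/-!
Write `O_y = {s | (y, s) ∈ O}` and let `G` be the set of pairs `(y, y')` for which `M̂(y)` and
`M̂(y')` are `(η,τ)`-indistinguishable. Then `P((y, M̂(y)) ∈ O) = E_{(y,y')} M̂(y)(O_y)`. On `G` the
integrand is at most `e^η M̂(y')(O_y) + τ`, and off `G`, an event of probability at most `ν`, it is
at most `1`. By Fubini, `E_{(y,y')} M̂(y')(O_y)` is `P((y', M̂(y)) ∈ O)` after renaming `y ↔ y'`.
The argument yields the constant `e^η`, which is at most `e^η / (1 - ν)`.
-/

open MeasureTheory ProbabilityTheory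
open scoped ENNReal

section

variable {α : Type*} [MeasurableSpace α]

theorem lintegral_le_mul_lintegral_add_add_measure_compl {μ : Measure α} [IsProbabilityMeasure μ]
    {f g : α → ℝ≥0∞} {G : Set α} {c t : ℝ≥0∞} (hG : MeasurableSet G) (hg : Measurable g)
    (hf : ∀ x, f x ≤ 1) (hfg : ∀ x ∈ G, f x ≤ c * g x + t) :
    ∫⁻ x, f x ∂μ ≤ c * ∫⁻ x, g x ∂μ + t + μ Gᶜ :=
  calc ∫⁻ x, f x ∂μ = ∫⁻ x in G, f x ∂μ + ∫⁻ x in Gᶜ, f x ∂μ := (lintegral_add_compl f hG).symm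
    _ ≤ ∫⁻ x in G, (c * g x + t) ∂μ + ∫⁻ _ in Gᶜ, 1 ∂μ :=
      add_le_add (setLIntegral_mono (by fun_prop) hfg)
        (setLIntegral_mono measurable_const fun x _ => hf x)
    _ ≤ ∫⁻ x, (c * g x + t) ∂μ + μ Gᶜ :=
      add_le_add (setLIntegral_le_lintegral _ _) (setLIntegral_one _).le
    _ = c * ∫⁻ x, g x ∂μ + t + μ Gᶜ := by
      rw [lintegral_add_right _ measurable_const, lintegral_const_mul _ hg, lintegral_const,
        measure_univ, mul_one]

theorem prob_compl_le_of_ofReal_one_sub_le {μ : Measure α} [IsProbabilityMeasure μ] {s : Set α}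
    (hs : MeasurableSet s) {ν : ℝ} (h : ENNReal.ofReal (1 - ν) ≤ μ s) :
    μ sᶜ ≤ ENNReal.ofReal ν := by
  rw [prob_compl_eq_one_sub hs, tsub_le_iff_right]
  calc (1 : ℝ≥0∞) = ENNReal.ofReal (ν + (1 - ν)) := by simp
    _ ≤ ENNReal.ofReal ν + ENNReal.ofReal (1 - ν) := ENNReal.ofReal_add_le
    _ ≤ ENNReal.ofReal ν + μ s := by gcongr

theorem measurableSet_setOf_indist {S : Type*} [Finite S] [MeasurableSpace S]
    [MeasurableSingletonClass S] (κ κ' : Kernel α S) (η τ : ℝ) :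
    MeasurableSet {x | Indist η τ (κ x) (κ' x)} := by
  simp only [Indist, Set.ofPred_forall, Set.ofPred_and]
  refine .iInter fun U => .iInter fun hU => ?_
  have hκ := κ.measurable_coe hU
  have hκ' := κ'.measurable_coe hU
  exact (measurableSet_le (by fun_prop) (by fun_prop)).inter
    (measurableSet_le (by fun_prop) (by fun_prop))

end

theorem compProd_apply_le_of_indist_on {α β : Type*} [MeasurableSpace α] [MeasurableSpace β]
    {μ : Measure α} [IsProbabilityMeasure μ] {κ : Kernel α β} [IsMarkovKernel κ] {η τ : ℝ}
    {G : Set (α × α)} (hG : MeasurableSet G) (hindist : ∀ p ∈ G, Indist η τ (κ p.1) (κ p.2))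
    {O : Set (α × β)} (hO : MeasurableSet O) :
    (μ ⊗ₘ κ) O ≤ ENNReal.ofReal (Real.exp η) * ∫⁻ ω, ∫⁻ ω', κ ω (Prod.mk ω' ⁻¹' O) ∂μ ∂μ +
      ENNReal.ofReal τ + (μ.prod μ) Gᶜ := by
  have hswapped : Measurable fun p : α × α => κ p.2 (Prod.mk p.1 ⁻¹' O) :=
    (Kernel.prodMkLeft α κ).measurable_kernel_prodMk_left
      ((measurable_fst.fst.prodMk measurable_snd) hO)
  calc (μ ⊗ₘ κ) O = ∫⁻ p, κ p.1 (Prod.mk p.1 ⁻¹' O) ∂(μ.prod μ) := by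
        rw [Measure.compProd_apply hO, lintegral_prod (fun p : α × α => κ p.1 (Prod.mk p.1 ⁻¹' O))
          ((κ.measurable_kernel_prodMk_left hO).comp measurable_fst).aemeasurable]
        simp
    _ ≤ ENNReal.ofReal (Real.exp η) * ∫⁻ p, κ p.2 (Prod.mk p.1 ⁻¹' O) ∂(μ.prod μ) +
          ENNReal.ofReal τ + (μ.prod μ) Gᶜ :=
      lintegral_le_mul_lintegral_add_add_measure_compl hG hswapped (fun _ => prob_le_one)
        fun p hp => (hindist p hp _ (measurable_prodMk_left hO)).1
    _ = _ := by rw [lintegral_prod_symm _ hswapped.aemeasurable]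

theorem near_independence_general {S : Type*} [Fintype S] [MeasurableSpace S]
    [MeasurableSingletonClass S] {n : ℕ}
    (P : Measure (Fin n → ℝ)) [IsProbabilityMeasure P]
    (Mhat : Kernel (Fin n → ℝ) S) [IsMarkovKernel Mhat]
    (η τ ν : ℝ) (hν0 : 0 ≤ ν) (hν1 : ν < 1)
    (hstable : ENNReal.ofReal (1 - ν) ≤
      (P.prod P) {p | Indist η τ (Mhat p.1) (Mhat p.2)})
    (O : Set ((Fin n → ℝ) × S)) (hO : MeasurableSet O) :
    (P ⊗ₘ Mhat) O ≤
      ENNReal.ofReal (Real.exp η / (1 - ν)) *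
        (∫⁻ ω, ∫⁻ ω', (Mhat ω) (Prod.mk ω' ⁻¹' O) ∂P ∂P) +
      ENNReal.ofReal τ + ENNReal.ofReal ν := by
  have hG : MeasurableSet {p : (Fin n → ℝ) × (Fin n → ℝ) | Indist η τ (Mhat p.1) (Mhat p.2)} :=
    measurableSet_setOf_indist (Mhat.comap Prod.fst measurable_fst)
      (Mhat.comap Prod.snd measurable_snd) η τ
  have hexp : ENNReal.ofReal (Real.exp η) ≤ ENNReal.ofReal (Real.exp η / (1 - ν)) :=
    ENNReal.ofReal_le_ofReal (le_div_self (Real.exp_pos η).le (by linarith) (by linarith))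
  calc (P ⊗ₘ Mhat) O
      ≤ ENNReal.ofReal (Real.exp η) * ∫⁻ ω, ∫⁻ ω', Mhat ω (Prod.mk ω' ⁻¹' O) ∂P ∂P +
          ENNReal.ofReal τ + (P.prod P) {p | Indist η τ (Mhat p.1) (Mhat p.2)}ᶜ :=
        compProd_apply_le_of_indist_on hG (fun _ hp => hp) hO
    _ ≤ _ := by gcongr; exact prob_compl_le_of_ofReal_one_sub_le hG hstable

/-- Near-independence from stability: if the randomized selection `M̂` (a Markov
kernel) is `(η,τ,ν)`-stable with respect to `P`, then for every measurable event `O`,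
`P((y, M̂(y)) ∈ O) ≤ (e^η/(1-ν)) P((y', M̂(y)) ∈ O) + τ + ν`. -/
theorem near_independence {S : Type*} [Fintype S] [MeasurableSpace S]
    [MeasurableSingletonClass S] {n : ℕ}
    (P : Measure (Fin n → ℝ)) [IsProbabilityMeasure P]
    (Mhat : Kernel (Fin n → ℝ) S) [IsMarkovKernel Mhat]
    (η τ ν : ℝ) (hη : 0 ≤ η) (hτ : 0 ≤ τ) (hν0 : 0 ≤ ν) (hν1 : ν < 1)
    (hstable : ENNReal.ofReal (1 - ν) ≤
      (P.prod P) {p | Indist η τ (Mhat p.1) (Mhat p.2)})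
    (O : Set ((Fin n → ℝ) × S)) (hO : MeasurableSet O) :
    (P ⊗ₘ Mhat) O ≤
      ENNReal.ofReal (Real.exp η / (1 - ν)) *
        (∫⁻ ω, ∫⁻ ω', (Mhat ω) (Prod.mk ω' ⁻¹' O) ∂P ∂P) +
      ENNReal.ofReal τ + ENNReal.ofReal ν :=
  near_independence_general P Mhat η τ ν hν0 hν1 hstable O hO
end

section
/- (Stability correction for simultaneous coverage) Suppose for each fixed model M and level α the event E_M(α) (miscoverage using constant K_{M,α}) satisfies P(y ∈ E_M(α)) ≤ α for y ~ P. Let M̂ be an (η,τ,ν)-stable selection with ν < 1 and fix δ ∈ (0,1). Then P(y ∈ E_{M̂(y)}(δ(1−ν)e^{−η})) ≤ δ + τ + ν. -/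
open MeasureTheory ProbabilityTheory

variable {d : ℕ}

instance : MeasurableSpace (Finset (Fin d)) := ⊤

instance : MeasurableSingletonClass (Finset (Fin d)) :=
  ⟨fun _ => MeasurableSpace.measurableSet_top⟩

/-! With `α = δ(1-ν)e^{-η}` and `A y = {M | y ∈ E M α}`, stability gives, for an independent copy
`y'` of the data, `M̂(y)(A y) ≤ e^η M̂(y')(A y) + τ` outside a set of pairs of probability at most
`ν`. Hence the miscoverage probability is at most `e^η ∫∫ M̂(y')(A y) + τ + ν`. In the decoupled
integral the model no longer depends on `y`, so the fixed-model guarantee bounds it by `α`, and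
`e^η α = δ(1-ν) ≤ δ`. -/

open scoped ENNReal

section NearIndependence

variable {X Y : Type*} [MeasurableSpace X] [MeasurableSpace Y]

lemma measure_le_ofReal_of_ofReal_one_sub_le_compl {μ : Measure X} [IsProbabilityMeasure μ]
    {s : Set X} (hs : MeasurableSet s) {ν : ℝ} (h : ENNReal.ofReal (1 - ν) ≤ μ sᶜ) :
    μ s ≤ ENNReal.ofReal ν := by
  calc μ s = 1 - μ sᶜ := by
        rw [prob_compl_eq_one_sub hs, ENNReal.sub_sub_cancel ENNReal.one_ne_top prob_le_one]
    _ ≤ 1 - ENNReal.ofReal (1 - ν) := tsub_le_tsub_left h 1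
    _ ≤ ENNReal.ofReal ν := by
      rw [tsub_le_iff_right, ← ENNReal.ofReal_one]
      calc ENNReal.ofReal 1 = ENNReal.ofReal (ν + (1 - ν)) := by ring_nf
        _ ≤ _ := ENNReal.ofReal_add_le

lemma measurable_kernel_snd_prodMk_fst_preimage (κ : Kernel X Y) [IsSFiniteKernel κ]
    {S : Set (X × Y)} (hS : MeasurableSet S) :
    Measurable fun p : X × X => κ p.2 (Prod.mk p.1 ⁻¹' S) :=
  -- sections of `{((x, x'), y) | (x, y) ∈ S}` under the kernel `(x, x') ↦ κ x'`
  (Kernel.measurable_kernel_prodMk_left (κ := Kernel.prodMkLeft X κ)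
    (hS.preimage (measurable_fst.fst.prodMk measurable_snd)) :)

lemma lintegral_kernel_snd_eq_prod_comp (P : Measure X) [SFinite P]
    (κ : Kernel X Y) [IsSFiniteKernel κ] {S : Set (X × Y)} (hS : MeasurableSet S) :
    ∫⁻ p, κ p.2 (Prod.mk p.1 ⁻¹' S) ∂(P.prod P) = (P.prod (κ ∘ₘ P)) S := by
  rw [lintegral_prod _ (measurable_kernel_snd_prodMk_fst_preimage κ hS).aemeasurable,
    Measure.prod_apply hS]
  refine lintegral_congr fun x => ?_
  rw [Measure.bind_apply (measurable_prodMk_left hS) κ.measurable.aemeasurable]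

theorem compProd_le_prod_comp_of_indist (P : Measure X) [IsProbabilityMeasure P]
    (κ : Kernel X Y) [IsMarkovKernel κ] {η τ ν : ℝ}
    (hstable : ENNReal.ofReal (1 - ν) ≤ (P.prod P) {p | Indist η τ (κ p.1) (κ p.2)})
    {S : Set (X × Y)} (hS : MeasurableSet S) :
    (P ⊗ₘ κ) S ≤
      ENNReal.ofReal (Real.exp η) * (P.prod (κ ∘ₘ P)) S + ENNReal.ofReal τ + ENNReal.ofReal ν := by
  set f : X → ℝ≥0∞ := fun x => κ x (Prod.mk x ⁻¹' S)
  set g : X × X → ℝ≥0∞ := fun p => κ p.2 (Prod.mk p.1 ⁻¹' S)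
  have hf : Measurable f := Kernel.measurable_kernel_prodMk_left hS
  have hg : Measurable g := measurable_kernel_snd_prodMk_fst_preimage κ hS
  set B := {p : X × X | ¬ f p.1 ≤ ENNReal.ofReal (Real.exp η) * g p + ENNReal.ofReal τ}
  have hB : MeasurableSet B :=
    (measurableSet_le (hf.comp measurable_fst) ((hg.const_mul _).add_const _)).compl
  have hPB : (P.prod P) B ≤ ENNReal.ofReal ν :=
    measure_le_ofReal_of_ofReal_one_sub_le_compl hB <| hstable.trans <| measure_mono
      fun p hp => by simpa [B] using (hp _ (measurable_prodMk_left hS)).1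
  have hpt : ∀ p,
      f p.1 ≤ ENNReal.ofReal (Real.exp η) * g p + ENNReal.ofReal τ + B.indicator 1 p := by
    intro p
    by_cases hp : p ∈ B
    · simpa [hp] using le_add_left prob_le_one
    · exact le_add_right (not_not.1 hp)
  calc (P ⊗ₘ κ) S = ∫⁻ p, f p.1 ∂(P.prod P) := by
        rw [Measure.compProd_apply hS, ← lintegral_map hf measurable_fst, ← Measure.fst,
          Measure.fst_prod]
    _ ≤ ∫⁻ p, ENNReal.ofReal (Real.exp η) * g p + ENNReal.ofReal τ + B.indicator 1 p
          ∂(P.prod P) :=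
        lintegral_mono hpt
    _ = ENNReal.ofReal (Real.exp η) * ∫⁻ p, g p ∂(P.prod P) + ENNReal.ofReal τ
          + (P.prod P) B := by
        rw [lintegral_add_right _ (measurable_one.indicator hB),
          lintegral_add_right _ measurable_const, lintegral_const_mul _ hg, lintegral_const,
          lintegral_indicator_one hB]
        simp
    _ ≤ _ := by
        rw [lintegral_kernel_snd_eq_prod_comp P κ hS]
        gcongr

lemma prod_apply_le_of_forall_measure_preimage_le {μ : Measure X} {ν : Measure Y} [SFinite μ]
    [IsProbabilityMeasure ν] {S : Set (X × Y)} (hS : MeasurableSet S) {c : ℝ≥0∞}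
    (h : ∀ y, μ ((fun x => (x, y)) ⁻¹' S) ≤ c) : (μ.prod ν) S ≤ c := by
  rw [Measure.prod_apply_symm hS]
  calc ∫⁻ y, μ ((fun x => (x, y)) ⁻¹' S) ∂ν ≤ ∫⁻ _, c ∂ν := lintegral_mono h
    _ = c := by simp

lemma measurableSet_setOf_mem_of_countable [Countable Y] [MeasurableSingletonClass Y]
    {E : Y → Set X} (hE : ∀ y, MeasurableSet (E y)) :
    MeasurableSet {p : X × Y | p.1 ∈ E p.2} :=
  measurableSet_setOfPred.2 <|
    measurable_from_prod_countable_left fun y => measurableSet_setOfPred.1 (hE y)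

end NearIndependence

/-- Stability correction for simultaneous coverage: if for each fixed model `M`
and level `α ∈ (0,1)` the miscoverage event `E M α` has probability at most `α`,
and the (randomized) selection `M̂` is `(η,τ,ν)`-stable, then the miscoverage
probability of the data-dependent event at level `δ(1-ν)e^{-η}` is at most
`δ + τ + ν`. -/
theorem stability_correction {n : ℕ}
    (P : Measure (Fin n → ℝ)) [IsProbabilityMeasure P]
    (E : Finset (Fin d) → ℝ → Set (Fin n → ℝ))
    (hEmeas : ∀ M α, MeasurableSet (E M α))
    (hE : ∀ M : Finset (Fin d), ∀ α ∈ Set.Ioo (0 : ℝ) 1, P (E M α) ≤ ENNReal.ofReal α)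
    (Mhat : Kernel (Fin n → ℝ) (Finset (Fin d))) [IsMarkovKernel Mhat]
    (η τ ν δ : ℝ) (hη : 0 ≤ η) (hτ : 0 ≤ τ) (hν0 : 0 ≤ ν) (hν1 : ν < 1)
    (hδ : δ ∈ Set.Ioo (0 : ℝ) 1)
    (hstable : ENNReal.ofReal (1 - ν) ≤
      (P.prod P) {p | Indist η τ (Mhat p.1) (Mhat p.2)}) :
    (P ⊗ₘ Mhat) {p | p.1 ∈ E p.2 (δ * (1 - ν) * Real.exp (-η))}
      ≤ ENNReal.ofReal (δ + τ + ν) := by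
  obtain ⟨hδ0, hδ1⟩ := hδ
  set α := δ * (1 - ν) * Real.exp (-η) with hα
  have hexp_mul : Real.exp η * α = δ * (1 - ν) := by
    rw [hα, Real.exp_neg]
    field_simp
  have hδν : 0 < δ * (1 - ν) := mul_pos hδ0 (sub_pos.2 hν1)
  have hαmem : α ∈ Set.Ioo 0 1 := by
    refine ⟨mul_pos hδν (Real.exp_pos _), ?_⟩
    calc α ≤ δ * (1 - ν) :=
          mul_le_of_le_one_right hδν.le (Real.exp_le_one_iff.2 (neg_nonpos.2 hη))
      _ < 1 := by nlinarith
  have hS := measurableSet_setOf_mem_of_countable fun M => hEmeas M α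
  calc (P ⊗ₘ Mhat) {p | p.1 ∈ E p.2 α}
      ≤ ENNReal.ofReal (Real.exp η) * (P.prod (Mhat ∘ₘ P)) {p | p.1 ∈ E p.2 α}
          + ENNReal.ofReal τ + ENNReal.ofReal ν :=
        compProd_le_prod_comp_of_indist P Mhat hstable hS
    _ ≤ ENNReal.ofReal (Real.exp η) * ENNReal.ofReal α
          + ENNReal.ofReal τ + ENNReal.ofReal ν := by
        gcongr
        exact prod_apply_le_of_forall_measure_preimage_le hS fun M => hE M α hαmem
    _ = ENNReal.ofReal (δ * (1 - ν) + τ + ν) := by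
        rw [← ENNReal.ofReal_mul (Real.exp_pos η).le, hexp_mul,
          ENNReal.ofReal_add (by positivity) hν0, ENNReal.ofReal_add hδν.le hτ]
    _ ≤ ENNReal.ofReal (δ + τ + ν) := ENNReal.ofReal_le_ofReal (by nlinarith)
end

section
/- (Report-noisy-max-of-absolute-values stability step) Let (c_i)_{i∈[d]} and (c'_i)_{i∈[d]} be real vectors with ‖c − c'‖_∞ ≤ s. Add independent Laplace noise ξ_i ~ Lap(2s/η) and output argmax_i |c_i + ξ_i|. Then for every index i*, P(argmax for c equals i*) ≤ e^η · P(argmax for c' equals i*). -/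
open MeasureTheory

instance (b : ℝ) : SigmaFinite (lapM b) :=
  MeasureTheory.SigmaFinite.withDensity_ofReal _

open Real Set ENNReal

lemma lapD_le {b s η : ℝ} (hb : 0 < b) (hbs : 2 * s / b = η) (x y : ℝ)
    (hxy : |x - y| ≤ 2 * s) : lapD b x ≤ Real.exp η * lapD b y := by
  unfold lapD
  rw [mul_left_comm]
  apply mul_le_mul_of_nonneg_left _ (by positivity)
  rw [← Real.exp_add]
  apply Real.exp_le_exp.2
  have h1 : |y| - |x| ≤ 2 * s := by
    have := abs_sub_abs_le_abs_sub y x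
    rw [abs_sub_comm] at this
    linarith
  have h2 : η + -|y| / b = (2 * s - |y|) / b := by
    rw [← hbs, ← add_div]
    ring_nf
  rw [h2]
  rw [div_le_div_iff_of_pos_right hb] -- may not be right name
  linarith

lemma lapM_apply {b : ℝ} {S : Set ℝ} (hS : MeasurableSet S) :
    lapM b S = ∫⁻ x, S.indicator (fun x => ENNReal.ofReal (lapD b x)) x := by
  rw [lapM, withDensity_apply _ hS, lintegral_indicator hS]

lemma tail_Ioi {b s η : ℝ} (hb : 0 < b) (hbs : 2 * s / b = η) (hs : 0 < s) (t : ℝ) :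
    lapM b (Ioi t) ≤ ENNReal.ofReal (Real.exp η) * lapM b (Ioi (t + 2 * s)) := by
  rw [lapM_apply measurableSet_Ioi, lapM_apply measurableSet_Ioi]
  set f : ℝ → ℝ≥0∞ := fun x => ENNReal.ofReal (lapD b x) with hf
  calc ∫⁻ x, (Ioi t).indicator f x
      = ∫⁻ x, (Ioi t).indicator f (x + -(2 * s)) :=
        (lintegral_add_right_eq_self (fun x => (Ioi t).indicator f x) (-(2 * s))).symm
    _ ≤ ∫⁻ x, ENNReal.ofReal (Real.exp η) * (Ioi (t + 2 * s)).indicator f x := by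
        apply lintegral_mono
        intro x
        dsimp only
        by_cases hx : t + 2 * s < x
        · rw [Set.indicator_of_mem (show x + -(2*s) ∈ Ioi t by simp only [mem_Ioi]; linarith),
            Set.indicator_of_mem (show x ∈ Ioi (t + 2*s) from hx), hf]
          rw [← ENNReal.ofReal_mul (Real.exp_nonneg _)]
          apply ENNReal.ofReal_le_ofReal
          apply lapD_le hb hbs
          have : x + -(2 * s) - x = -(2 * s) := by ring
          rw [this, abs_neg, abs_of_pos (by positivity)]
        · rw [Set.indicator_of_notMem (show x + -(2*s) ∉ Ioi t by simp only [mem_Ioi]; intro hc; exact hx (by linarith))]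
          exact zero_le
    _ = ENNReal.ofReal (Real.exp η) * ∫⁻ x, (Ioi (t + 2 * s)).indicator f x :=
        lintegral_const_mul' _ _ ENNReal.ofReal_ne_top

lemma tail_Iio {b s η : ℝ} (hb : 0 < b) (hbs : 2 * s / b = η) (hs : 0 < s) (t : ℝ) :
    lapM b (Iio t) ≤ ENNReal.ofReal (Real.exp η) * lapM b (Iio (t - 2 * s)) := by
  rw [lapM_apply measurableSet_Iio, lapM_apply measurableSet_Iio]
  set f : ℝ → ℝ≥0∞ := fun x => ENNReal.ofReal (lapD b x) with hf
  calc ∫⁻ x, (Iio t).indicator f x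
      = ∫⁻ x, (Iio t).indicator f (x + 2 * s) :=
        (lintegral_add_right_eq_self (fun x => (Iio t).indicator f x) (2 * s)).symm
    _ ≤ ∫⁻ x, ENNReal.ofReal (Real.exp η) * (Iio (t - 2 * s)).indicator f x := by
        apply lintegral_mono
        intro x
        dsimp only
        by_cases hx : x < t - 2 * s
        · rw [Set.indicator_of_mem (show x + 2*s ∈ Iio t by simp only [mem_Iio]; linarith),
            Set.indicator_of_mem (show x ∈ Iio (t - 2*s) from hx), hf]
          rw [← ENNReal.ofReal_mul (Real.exp_nonneg _)]
          apply ENNReal.ofReal_le_ofReal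
          apply lapD_le hb hbs
          have : x + 2 * s - x = 2 * s := by ring
          rw [this, abs_of_pos (by positivity)]
        · rw [Set.indicator_of_notMem (show x + 2*s ∉ Iio t by simp only [mem_Iio]; intro hc; exact hx (by linarith))]
          exact zero_le
    _ = ENNReal.ofReal (Real.exp η) * ∫⁻ x, (Iio (t - 2 * s)).indicator f x :=
        lintegral_const_mul' _ _ ENNReal.ofReal_ne_top

lemma slice_meas {d : ℕ} (a : Fin d → ℝ) (k : ℝ) (istar : Fin d) :
    MeasurableSet {v : ℝ | ∀ i, i ≠ istar → a i < |k + v|} := by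
  have : {v : ℝ | ∀ i, i ≠ istar → a i < |k + v|}
      = ⋂ i, {v : ℝ | i ≠ istar → a i < |k + v|} := by
    ext v; simp [Set.mem_iInter]
  rw [this]
  refine MeasurableSet.iInter fun i => ?_
  by_cases hi : i = istar
  · simp [hi]
  · have : {v : ℝ | i ≠ istar → a i < |k + v|} = {v : ℝ | a i < |k + v|} := by
      ext v; simp [hi]
    rw [this]
    exact measurableSet_lt measurable_const (by fun_prop)

lemma slice_rep {d : ℕ} (a : Fin d → ℝ) (k : ℝ) (istar : Fin d)
    {T : Finset (Fin d)} (hT : T.Nonempty) (hTdef : ∀ i, i ∈ T ↔ i ≠ istar) :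
    {v : ℝ | ∀ i, i ≠ istar → a i < |k + v|}
      = Ioi (T.sup' hT a - k) ∪ Iio (-(T.sup' hT a) - k) := by
  ext v
  simp only [mem_setOf_eq, mem_union, mem_Ioi, mem_Iio]
  have h1 : (∀ i, i ≠ istar → a i < |k + v|) ↔ T.sup' hT a < |k + v| := by
    rw [Finset.sup'_lt_iff]
    constructor
    · intro hv i hiT; exact hv i ((hTdef i).1 hiT)
    · intro hv i hi; exact hv i ((hTdef i).2 hi)
  rw [h1, lt_abs]
  constructor
  · rintro (hc | hc)
    · left; linarith
    · right; linarith
  · rintro (hc | hc)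
    · left; linarith
    · right; linarith

lemma slice_le {d : ℕ} (c c' : Fin d → ℝ) {b s η : ℝ}
    (hb : 0 < b) (hbs : 2 * s / b = η) (hs : 0 < s) (hη : 0 < η)
    (h : ∀ i, |c i - c' i| ≤ s) (istar : Fin d) (ξ : Fin d → ℝ) :
    lapM b {v : ℝ | ∀ i, i ≠ istar → |c i + ξ i| < |c istar + v|}
      ≤ ENNReal.ofReal (Real.exp η) *
        lapM b {v : ℝ | ∀ i, i ≠ istar → |c' i + ξ i| < |c' istar + v|} := by
  classical
  by_cases hall : ∀ i : Fin d, i = istar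
  · have he : ∀ f : Fin d → ℝ,
        {v : ℝ | ∀ i, i ≠ istar → |f i + ξ i| < |f istar + v|} = Set.univ := by
      intro f; ext v
      simp only [mem_setOf_eq, mem_univ, iff_true]
      intro i hi; exact absurd (hall i) hi
    rw [he c, he c']
    exact le_mul_of_one_le_left zero_le
      (ENNReal.one_le_ofReal.2 (Real.one_le_exp hη.le))
  · push_neg at hall
    set T : Finset (Fin d) := Finset.univ.filter (· ≠ istar) with hTdef'
    have hTdef : ∀ i, i ∈ T ↔ i ≠ istar := by
      intro i; simp [hTdef']
    obtain ⟨j, hj⟩ := hall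
    have hT : T.Nonempty := ⟨j, (hTdef j).2 hj⟩
    set M : ℝ := T.sup' hT (fun i => |c i + ξ i|) with hM
    set M' : ℝ := T.sup' hT (fun i => |c' i + ξ i|) with hM'
    have hM'0 : 0 ≤ M' := by
      rw [hM']
      exact le_trans (abs_nonneg (c' j + ξ j))
        (Finset.le_sup' (fun i => |c' i + ξ i|) ((hTdef j).2 hj))
    have hMM' : M' ≤ M + s := by
      rw [hM']
      apply Finset.sup'_le
      intro i hi
      have h1 : |c i + ξ i| ≤ M := by
        rw [hM]; exact Finset.le_sup' (fun i => |c i + ξ i|) hi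
      have h2 : |c' i + ξ i| ≤ |c i + ξ i| + |c' i - c i| := by
        have := abs_add_le (c i + ξ i) (c' i - c i)
        have he : c i + ξ i + (c' i - c i) = c' i + ξ i := by ring
        rw [he] at this; exact this
      have h3 : |c' i - c i| ≤ s := by rw [abs_sub_comm]; exact h i
      linarith
    have hcc' : |c istar - c' istar| ≤ s := h istar
    have hc1 : c istar - s ≤ c' istar := by
      have := abs_le.1 hcc'; linarith [this.1, this.2]
    have hc2 : c' istar ≤ c istar + s := by
      have := abs_le.1 hcc'; linarith [this.1, this.2]
    rw [slice_rep _ _ _ hT hTdef, slice_rep _ _ _ hT hTdef]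
    have hdisj : Disjoint (Ioi (M' - c' istar)) (Iio (-M' - c' istar)) := by
      rw [Set.disjoint_left]
      intro v hv1 hv2
      simp only [mem_Ioi] at hv1
      simp only [mem_Iio] at hv2
      linarith
    calc lapM b (Ioi (M - c istar) ∪ Iio (-M - c istar))
        ≤ lapM b (Ioi (M - c istar)) + lapM b (Iio (-M - c istar)) :=
          measure_union_le _ _
      _ ≤ (ENNReal.ofReal (Real.exp η) * lapM b (Ioi ((M - c istar) + 2 * s)))
          + (ENNReal.ofReal (Real.exp η) * lapM b (Iio ((-M - c istar) - 2 * s))) :=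
          add_le_add (tail_Ioi hb hbs hs _) (tail_Iio hb hbs hs _)
      _ ≤ (ENNReal.ofReal (Real.exp η) * lapM b (Ioi (M' - c' istar)))
          + (ENNReal.ofReal (Real.exp η) * lapM b (Iio (-M' - c' istar))) := by
          apply add_le_add
          · apply mul_le_mul_right (measure_mono (Ioi_subset_Ioi (by linarith)))
          · apply mul_le_mul_right (measure_mono (Iio_subset_Iio (by linarith)))
      _ = ENNReal.ofReal (Real.exp η) *
            (lapM b (Ioi (M' - c' istar)) + lapM b (Iio (-M' - c' istar))) := by
          rw [mul_add]
      _ = ENNReal.ofReal (Real.exp η) *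
            lapM b (Ioi (M' - c' istar) ∪ Iio (-M' - c' istar)) := by
          rw [measure_union hdisj measurableSet_Iio]

/-- Report-noisy-max-of-absolute-values stability step: if `‖c - c'‖_∞ ≤ s` and we
add i.i.d. `Lap(2s/η)` noise and report `argmax_i |c_i + ξ_i|`, then for every
index `i*`, the probability that `i*` wins under `c` is at most `e^η` times the
probability that it wins under `c'`. -/
theorem report_noisy_absmax {d : ℕ}
    (c c' : Fin d → ℝ) (s η : ℝ) (hs : 0 < s) (hη : 0 < η)
    (h : ∀ i, |c i - c' i| ≤ s) (istar : Fin d) :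
    (Measure.pi fun _ : Fin d => lapM (2 * s / η))
        {ξ | ∀ i, i ≠ istar → |c i + ξ i| < |c istar + ξ istar|}
      ≤ ENNReal.ofReal (Real.exp η) *
        (Measure.pi fun _ : Fin d => lapM (2 * s / η))
          {ξ | ∀ i, i ≠ istar → |c' i + ξ i| < |c' istar + ξ istar|} := by
  classical
  have hb : 0 < 2 * s / η := by positivity
  have hbs : 2 * s / (2 * s / η) = η := by
    field_simp
  have hmeas : ∀ f : Fin d → ℝ,
      MeasurableSet {ξ : Fin d → ℝ | ∀ i, i ≠ istar → |f i + ξ i| < |f istar + ξ istar|} := by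
    intro f
    have hrw : {ξ : Fin d → ℝ | ∀ i, i ≠ istar → |f i + ξ i| < |f istar + ξ istar|}
        = ⋂ i, {ξ : Fin d → ℝ | i ≠ istar → |f i + ξ i| < |f istar + ξ istar|} := by
      ext ξ; simp [Set.mem_iInter]
    rw [hrw]
    refine MeasurableSet.iInter fun i => ?_
    by_cases hi : i = istar
    · simp [hi]
    · have hrw2 : {ξ : Fin d → ℝ | i ≠ istar → |f i + ξ i| < |f istar + ξ istar|}
          = {ξ : Fin d → ℝ | |f i + ξ i| < |f istar + ξ istar|} := by
        ext ξ; simp [hi]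
      rw [hrw2]
      exact measurableSet_lt (by fun_prop) (by fun_prop)
  have expand : ∀ f : Fin d → ℝ,
      (Measure.pi fun _ : Fin d => lapM (2 * s / η))
          {ξ | ∀ i, i ≠ istar → |f i + ξ i| < |f istar + ξ istar|}
        = (∫⋯∫⁻_(Finset.univ.erase istar),
            (fun ξ => lapM (2 * s / η) {v : ℝ | ∀ i, i ≠ istar → |f i + ξ i| < |f istar + v|})
            ∂(fun _ : Fin d => lapM (2 * s / η))) (fun _ => 0) := by
    intro f
    rw [← lintegral_indicator_one (hmeas f),
      lintegral_eq_lmarginal_univ (fun _ : Fin d => (0 : ℝ)),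
      lmarginal_erase' _ (measurable_one.indicator (hmeas f)) (Finset.mem_univ istar)]
    apply congrFun
    apply congrArg
    funext ξ
    have hpt : ∀ v : ℝ,
        Set.indicator {ξ : Fin d → ℝ | ∀ i, i ≠ istar → |f i + ξ i| < |f istar + ξ istar|}
          (1 : (Fin d → ℝ) → ℝ≥0∞) (Function.update ξ istar v)
        = Set.indicator {v : ℝ | ∀ i, i ≠ istar → |f i + ξ i| < |f istar + v|}
          (1 : ℝ → ℝ≥0∞) v := by
      intro v
      by_cases hv : ∀ i, i ≠ istar → |f i + ξ i| < |f istar + v|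
      · have hv2 : Function.update ξ istar v
            ∈ {ξ : Fin d → ℝ | ∀ i, i ≠ istar → |f i + ξ i| < |f istar + ξ istar|} := by
          intro i hi
          rw [Function.update_of_ne hi, Function.update_self]
          exact hv i hi
        rw [Set.indicator_of_mem hv2,
          Set.indicator_of_mem (show v ∈ {v : ℝ | ∀ i, i ≠ istar → |f i + ξ i| < |f istar + v|} from hv)]
        rfl
      · have hv2 : Function.update ξ istar v
            ∉ {ξ : Fin d → ℝ | ∀ i, i ≠ istar → |f i + ξ i| < |f istar + ξ istar|} := by
          intro hc
          apply hv
          intro i hi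
          have hci := hc i hi
          rwa [Function.update_of_ne hi, Function.update_self] at hci
        rw [Set.indicator_of_notMem hv2,
          Set.indicator_of_notMem (show v ∉ {v : ℝ | ∀ i, i ≠ istar → |f i + ξ i| < |f istar + v|} from hv)]
    simp_rw [hpt]
    rw [lintegral_indicator_one (slice_meas _ _ _)]
  rw [expand c, expand c']
  refine le_trans
    (lmarginal_mono
      (f := fun ξ => lapM (2 * s / η)
        {v : ℝ | ∀ i, i ≠ istar → |c i + ξ i| < |c istar + v|})
      (g := fun ξ => ENNReal.ofReal (Real.exp η) * lapM (2 * s / η)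
        {v : ℝ | ∀ i, i ≠ istar → |c' i + ξ i| < |c' istar + v|})
      (fun ξ => slice_le c c' hb hbs hs hη h istar ξ) (fun _ => 0)) ?_
  have hconst :
      (∫⋯∫⁻_(Finset.univ.erase istar),
        (fun ξ => ENNReal.ofReal (Real.exp η) * lapM (2 * s / η)
          {v : ℝ | ∀ i, i ≠ istar → |c' i + ξ i| < |c' istar + v|})
        ∂(fun _ : Fin d => lapM (2 * s / η))) (fun _ => 0)
      = ENNReal.ofReal (Real.exp η) *
        (∫⋯∫⁻_(Finset.univ.erase istar),
          (fun ξ => lapM (2 * s / η)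
            {v : ℝ | ∀ i, i ≠ istar → |c' i + ξ i| < |c' istar + v|})
          ∂(fun _ : Fin d => lapM (2 * s / η))) (fun _ => 0) := by
    simp only [MeasureTheory.lmarginal]
    exact lintegral_const_mul' _ _ ENNReal.ofReal_ne_top
  rw [hconst]
end

section
/- (Screening utility from noise bound) Let c ∈ ℝ^d, let (m_1,…,m_d) order the indices so |c_{m_1}| ≥ … ≥ |c_{m_d}|, and run the greedy noisy-selection procedure: maintain res_1 = [d], at step t pick i_t = argmax_{i ∈ res_t} |c_i + ξ_{t,i}| and set res_{t+1} = res_t \ {i_t}, for noise values ξ_{t,i}. If all noise magnitudes satisfy |ξ_{t,i}| ≤ s/2, then for every j ∈ [k], |c_{m_j}| − |c_{i_j}| ≤ s. -/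
/-! Fewer than `j` indices are removed before step `j`, so by pigeonhole one of the `j`
largest coordinates `m 1, …, m j` is still available at step `j`. Comparing it with the
noisy maximiser `i j` costs at most `s/2` of noise on each side. -/

theorem Finset.exists_forall_ne_of_card_lt {α β γ : Type*} [DecidableEq α]
    {s : Finset β} {t : Finset γ} {m : β → α} (hm : Set.InjOn m s) (f : γ → α)
    (hst : t.card < s.card) : ∃ a ∈ s, ∀ x ∈ t, f x ≠ m a := by
  by_contra! hcover
  have hsub : s.image m ⊆ t.image f := by
    rintro _ hma
    obtain ⟨a, ha, rfl⟩ := mem_image.1 hma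
    obtain ⟨x, hx, hfx⟩ := hcover a ha
    exact mem_image.2 ⟨x, hx, hfx⟩
  have hcard := (card_le_card hsub).trans card_image_le
  rw [card_image_of_injOn hm] at hcard
  omega

theorem abs_sub_abs_le_of_abs_add_le_abs_add {x y ε δ s : ℝ} (hε : |ε| ≤ s / 2)
    (hδ : |δ| ≤ s / 2) (h : |x + ε| ≤ |y + δ|) : |x| - |y| ≤ s := by
  have hx : |x| ≤ |x + ε| + |ε| := by
    simpa using abs_sub (x + ε) ε
  have hy : |y + δ| ≤ |y| + |δ| := abs_add_le y δ
  linarith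

theorem screening_utility_general {d k : ℕ} (hk : k ≤ d)
    (c : Fin d → ℝ) (ξ : Fin k → Fin d → ℝ) (s : ℝ)
    (m : Equiv.Perm (Fin d))
    (hm : ∀ a b : Fin d, a ≤ b → |c (m b)| ≤ |c (m a)|)
    (i : Fin k → Fin d)
    (hsel_max : ∀ t : Fin k, ∀ j : Fin d, (∀ t' : Fin k, t' < t → i t' ≠ j) →
      |c j + ξ t j| ≤ |c (i t) + ξ t (i t)|)
    (hnoise : ∀ t : Fin k, ∀ j : Fin d, |ξ t j| ≤ s / 2) :
    ∀ j : Fin k, |c (m (Fin.castLE hk j))| - |c (i j)| ≤ s := by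
  intro j
  obtain ⟨a, haj, hfree⟩ := Finset.exists_forall_ne_of_card_lt
    (s := Finset.Iic (Fin.castLE hk j)) (t := Finset.Iio j) m.injective.injOn i
    (by simp [Fin.card_Iic, Fin.card_Iio])
  have hmax := hsel_max j (m a) fun t ht => hfree t (Finset.mem_Iio.2 ht)
  calc |c (m (Fin.castLE hk j))| - |c (i j)| ≤ |c (m a)| - |c (i j)| := by
        linarith [hm a _ (Finset.mem_Iic.1 haj)]
    _ ≤ s := abs_sub_abs_le_of_abs_add_le_abs_add (hnoise j (m a)) (hnoise j (i j)) hmax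

/-- Screening utility from a noise bound: run the greedy noisy-selection procedure
that at step `t` picks `i t`, the available index maximizing `|c i + ξ t i|`.  If
`m` orders the indices by decreasing `|c|` and all noise magnitudes are at most
`s/2`, then for every step `j`, `|c (m j)| - |c (i j)| ≤ s`. -/
theorem screening_utility {d k : ℕ} (hk : k ≤ d)
    (c : Fin d → ℝ) (ξ : Fin k → Fin d → ℝ) (s : ℝ)
    (m : Equiv.Perm (Fin d))
    (hm : ∀ a b : Fin d, a ≤ b → |c (m b)| ≤ |c (m a)|)
    (i : Fin k → Fin d)
    (hsel_mem : ∀ t : Fin k, ∀ t' : Fin k, t' < t → i t' ≠ i t)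
    (hsel_max : ∀ t : Fin k, ∀ j : Fin d, (∀ t' : Fin k, t' < t → i t' ≠ j) →
      |c j + ξ t j| ≤ |c (i t) + ξ t (i t)|)
    (hnoise : ∀ t : Fin k, ∀ j : Fin d, |ξ t j| ≤ s / 2) :
    ∀ j : Fin k, |c (m (Fin.castLE hk j))| - |c (i j)| ≤ s :=
  screening_utility_general hk c ξ s m hm i hsel_max hnoise
end
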